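/- For every positive integer n, every a, λ ∈ ℂ and every k with 1 ≤ k ≤ n+1, the principal minors satisfy the four-term recurrence Δ^{(k)}(a,λ) = −λ·Δ^{(k−1)}(a,λ) − (k−1)(n−k+2)·a·Δ^{(k−2)}(a,λ) + (n−k+2)(n−k+3)(k−1)(k−2)·Δ^{(k−3)}(a,λ). In particular Sp_n(a,λ) = Δ^{(n+1)}(a,λ) is computed by this recursion. -/

import Mathlib

/-- The `(n+1) × (n+1)` matrix `M_n^{(a)}` of the operator
`T_n(y) = y'' - (x² - a) y' + n x y` in the monomial basis `1, x, …, xⁿ`. -/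
def Mmat (n : ℕ) (a : ℂ) : Matrix (Fin (n + 1)) (Fin (n + 1)) ℂ :=
  Matrix.of fun i j =>
    if (j : ℕ) = (i : ℕ) + 1 then ((i : ℕ) + 1 : ℂ) * a
    else if (j : ℕ) = (i : ℕ) + 2 then ((i : ℕ) + 1 : ℂ) * ((i : ℕ) + 2 : ℂ)
    else if (i : ℕ) = (j : ℕ) + 1 then (n : ℂ) - (j : ℕ)
    else 0

/-- The `n`-th spectral polynomial `Sp_n(a, λ) = det (M_n^{(a)} - λ·Id)`. -/
def Sp (n : ℕ) (a lam : ℂ) : ℂ :=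
  Matrix.det (Mmat n a - lam • (1 : Matrix (Fin (n + 1)) (Fin (n + 1)) ℂ))

/-- `Δ^{(k)}(a, λ)`: the determinant of the top-left `k × k` submatrix of
`M_n^{(a)} - λ·Id` (for `k ≤ n+1`; junk value `0` otherwise), so `Δ^{(0)} = 1`.
Note that for the out-of-range indices `k-2, k-3` appearing in the recurrence below
for `k = 1, 2`, the corresponding coefficients `(k-1)` resp. `(k-1)(k-2)` vanish, so the
conventions `Δ^{(-1)} = Δ^{(-2)} = 0` are immaterial and truncated subtraction is faithful. -/
noncomputable def Delta (n k : ℕ) (a lam : ℂ) : ℂ :=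
  if h : k ≤ n + 1 then
    Matrix.det
      ((Mmat n a - lam • (1 : Matrix (Fin (n + 1)) (Fin (n + 1)) ℂ)).submatrix
        (fun i : Fin k => Fin.castLE h i) (fun j : Fin k => Fin.castLE h j))
  else 0


/-!
`M_n^{(a)} - λ·Id` is a band matrix: below the diagonal only the first subdiagonal, above it only
the first two superdiagonals are nonzero. For any such matrix, expanding the `k`-th leading minor
along its last row (two nonzero entries), the resulting minor along its last column (again two
nonzero entries) and the remaining minor along its last row (one nonzero entry) gives a four-term
recurrence whose coefficients are products of band entries.
-/

open Matrix

variable {R : Type*} [CommRing R]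

def leadingMinor (f : ℕ → ℕ → R) (k : ℕ) : R :=
  (Matrix.of fun i j : Fin k => f i j).det

def succAboveNat (p j : ℕ) : ℕ := if j < p then j else j + 1

lemma Fin.val_succAbove {m : ℕ} (p : Fin (m + 1)) (i : Fin m) :
    (p.succAbove i : ℕ) = succAboveNat p i := by
  unfold Fin.succAbove succAboveNat
  split_ifs <;> simp_all [Fin.lt_def]

variable {f : ℕ → ℕ → R}

lemma leadingMinor_congr {g : ℕ → ℕ → R} {k : ℕ} (h : ∀ i < k, ∀ j < k, f i j = g i j) :
    leadingMinor f k = leadingMinor g k := by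
  unfold leadingMinor
  congr 1
  ext i j
  exact h i i.isLt j j.isLt

lemma leadingMinor_swap (f : ℕ → ℕ → R) (k : ℕ) :
    leadingMinor (fun i j => f j i) k = leadingMinor f k :=
  det_transpose (Matrix.of fun i j : Fin k => f i j)

lemma leadingMinor_succ_of_last_row {k : ℕ} (hrow : ∀ j < k, f k j = 0) :
    leadingMinor f (k + 1) = f k k * leadingMinor f k := by
  unfold leadingMinor
  rw [det_succ_row _ (Fin.last k), Fin.sum_univ_castSucc,
    Finset.sum_eq_zero fun j _ => by simp [hrow j j.isLt]]
  simp [Fin.succAbove_last, submatrix]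

lemma leadingMinor_add_two_of_last_row {k : ℕ} (hrow : ∀ j < k, f (k + 1) j = 0) :
    leadingMinor f (k + 2) = f (k + 1) (k + 1) * leadingMinor f (k + 1)
      - f (k + 1) k * leadingMinor (fun i j => f i (succAboveNat k j)) (k + 1) := by
  unfold leadingMinor
  rw [det_succ_row _ (Fin.last (k + 1)), Fin.sum_univ_castSucc, Fin.sum_univ_castSucc,
    Finset.sum_eq_zero fun j _ => by simp [hrow j j.isLt]]
  have hsign : (-1 : R) ^ (k + 1 + k) = -1 := Odd.neg_one_pow ⟨k, by ring⟩
  simp [Fin.succAbove_last, submatrix, Fin.val_succAbove, hsign]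
  ring

theorem leadingMinor_add_three_of_band (hlow : ∀ i j, j + 1 < i → f i j = 0)
    (hup : ∀ i j, i + 2 < j → f i j = 0) (m : ℕ) :
    leadingMinor f (m + 3) = f (m + 2) (m + 2) * leadingMinor f (m + 2)
      - f (m + 2) (m + 1) * f (m + 1) (m + 2) * leadingMinor f (m + 1)
      + f (m + 2) (m + 1) * f m (m + 2) * f (m + 1) m * leadingMinor f m := by
  set C : ℕ → ℕ → R := fun i j => f j (succAboveNat (m + 1) i)
  set E : ℕ → ℕ → R := fun i j => C j (succAboveNat m i)
  have hC : leadingMinor (fun i j => f i (succAboveNat (m + 1) j)) (m + 2) =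
      f (m + 1) (m + 2) * leadingMinor f (m + 1) - f m (m + 2) * leadingMinor E (m + 1) := by
    have hCf : leadingMinor C (m + 1) = leadingMinor f (m + 1) := by
      rw [← leadingMinor_swap]
      exact leadingMinor_congr fun i _ j hj => by simp only [C, succAboveNat, if_pos hj]
    rw [← leadingMinor_swap, leadingMinor_add_two_of_last_row (f := C)
      fun j hj => hup j _ (by simp [succAboveNat]; omega), hCf,
      ← leadingMinor_swap (fun i j => C i _)]
    simp [C, E, succAboveNat]
  have hE : leadingMinor E (m + 1) = f (m + 1) m * leadingMinor f m := by
    have hrow : ∀ j < m, E m j = 0 := fun j hj => by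
      simp only [E, C, succAboveNat, lt_irrefl, if_false, if_pos (show j < m + 1 by omega)]
      exact hlow _ _ (by omega)
    rw [leadingMinor_succ_of_last_row hrow]
    congr 1
    · simp [E, C, succAboveNat]
    · exact leadingMinor_congr fun i hi j hj => by
        simp only [E, C, succAboveNat, if_pos hi, if_pos (show j < m + 1 by omega)]
  rw [leadingMinor_add_two_of_last_row fun j hj => hlow _ _ (by omega), hC, hE]
  ring

/-- The entries of `M_n^{(a)} - λ·Id`, indexed from `0` and extended by `0` outside the band. -/
def shiftedEntry (n : ℕ) (a lam : ℂ) (i j : ℕ) : ℂ :=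
  if j = i + 1 then ((i : ℂ) + 1) * a
  else if j = i + 2 then ((i : ℂ) + 1) * ((i : ℂ) + 2)
  else if i = j + 1 then (n : ℂ) - j
  else if i = j then -lam
  else 0

section shiftedEntry

variable {n : ℕ} {a lam : ℂ}

lemma shiftedEntry_of_lt {i j : ℕ} (h : j + 1 < i) :
    shiftedEntry n a lam i j = 0 := by
  simp only [shiftedEntry]
  split_ifs <;> first | rfl | omega

lemma shiftedEntry_of_gt {i j : ℕ} (h : i + 2 < j) :
    shiftedEntry n a lam i j = 0 := by
  simp only [shiftedEntry]
  split_ifs <;> first | rfl | omega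

@[simp] lemma shiftedEntry_self (i : ℕ) : shiftedEntry n a lam i i = -lam := by
  simp [shiftedEntry]

@[simp] lemma shiftedEntry_self_add_one (i : ℕ) :
    shiftedEntry n a lam i (i + 1) = ((i : ℂ) + 1) * a := by
  simp [shiftedEntry]

@[simp] lemma shiftedEntry_self_add_two (i : ℕ) :
    shiftedEntry n a lam i (i + 2) = ((i : ℂ) + 1) * ((i : ℂ) + 2) := by
  simp [shiftedEntry]

@[simp] lemma shiftedEntry_add_one_self (i : ℕ) :
    shiftedEntry n a lam (i + 1) i = (n : ℂ) - i := by
  rw [shiftedEntry, if_neg (by omega), if_neg (by omega), if_pos rfl]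

lemma leadingMinor_shiftedEntry : ∀ k, 1 ≤ k →
    leadingMinor (shiftedEntry n a lam) k =
      -lam * leadingMinor (shiftedEntry n a lam) (k - 1) -
        ((k : ℂ) - 1) * ((n : ℂ) - k + 2) * a * leadingMinor (shiftedEntry n a lam) (k - 2) +
        ((n : ℂ) - k + 2) * ((n : ℂ) - k + 3) * ((k : ℂ) - 1) * ((k : ℂ) - 2) *
          leadingMinor (shiftedEntry n a lam) (k - 3)
  | 1, _ => by simp [leadingMinor]
  | 2, _ => by
    simp [leadingMinor, det_fin_two]
    ring
  | m + 3, _ => by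
    rw [leadingMinor_add_three_of_band (fun _ _ => shiftedEntry_of_lt)
      (fun _ _ => shiftedEntry_of_gt)]
    simp only [Nat.reduceSubDiff, shiftedEntry_self, shiftedEntry_self_add_one,
      shiftedEntry_self_add_two, shiftedEntry_add_one_self]
    push_cast
    ring

end shiftedEntry

lemma Delta_eq_leadingMinor {n k : ℕ} (a lam : ℂ) (h : k ≤ n + 1) :
    Delta n k a lam = leadingMinor (shiftedEntry n a lam) k := by
  rw [Delta, dif_pos h, leadingMinor]
  congr 1
  ext i j
  simp only [submatrix_apply, Matrix.sub_apply, Matrix.smul_apply, one_apply, Mmat, of_apply,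
    shiftedEntry, smul_eq_mul, Fin.val_castLE, Fin.ext_iff]
  split_ifs <;> first | omega | ring

lemma Sp_eq_Delta (n : ℕ) (a lam : ℂ) : Sp n a lam = Delta n (n + 1) a lam := by
  rw [Sp, Delta, dif_pos le_rfl, Fin.castLE_rfl, submatrix_id_id]

theorem Delta_four_term_recurrence_general (n : ℕ) (a lam : ℂ) :
    (∀ k : ℕ, 1 ≤ k → k ≤ n + 1 →
      Delta n k a lam =
        -lam * Delta n (k - 1) a lam -
          ((k : ℂ) - 1) * ((n : ℂ) - k + 2) * a * Delta n (k - 2) a lam +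
          ((n : ℂ) - k + 2) * ((n : ℂ) - k + 3) * ((k : ℂ) - 1) * ((k : ℂ) - 2) *
            Delta n (k - 3) a lam) ∧
    Sp n a lam = Delta n (n + 1) a lam := by
  refine ⟨fun k hk1 hk2 => ?_, Sp_eq_Delta n a lam⟩
  simp only [Delta_eq_leadingMinor a lam ((Nat.sub_le k _).trans hk2),
    Delta_eq_leadingMinor a lam hk2]
  exact leadingMinor_shiftedEntry k hk1

/-- The principal minors of `M_n^{(a)} - λ·Id` satisfy the four-term recurrence
`Δ^{(k)} = -λ·Δ^{(k-1)} - (k-1)(n-k+2)·a·Δ^{(k-2)} + (n-k+2)(n-k+3)(k-1)(k-2)·Δ^{(k-3)}`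
for `1 ≤ k ≤ n+1`; in particular `Sp_n(a,λ) = Δ^{(n+1)}(a,λ)`. -/
theorem Delta_four_term_recurrence (n : ℕ) (hn : 0 < n) (a lam : ℂ) :
    (∀ k : ℕ, 1 ≤ k → k ≤ n + 1 →
      Delta n k a lam =
        -lam * Delta n (k - 1) a lam -
          ((k : ℂ) - 1) * ((n : ℂ) - k + 2) * a * Delta n (k - 2) a lam +
          ((n : ℂ) - k + 2) * ((n : ℂ) - k + 3) * ((k : ℂ) - 1) * ((k : ℂ) - 2) *
            Delta n (k - 3) a lam) ∧
    Sp n a lam = Delta n (n + 1) a lam :=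
  Delta_four_term_recurrence_general n a lam
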